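/- arXiv:1005.4627 — 3 statements merged into one kernel-verified Lean document; each statement's English description precedes it below -/
import Mathlib

section
/- Let a, b, c, d be real numbers with (a,b) ≠ (0,0) and (c,d) ≠ (0,0). If there exists an affine map M(x) = αx + β with α > 0 such that M ∘ C_{a,b} = C_{c,d} ∘ M on ℝ, where C_{a,b}(x) = a·sin(x) + b·cos(x), then (a,b) = (c,d) and M is the identity. -/
/-!
Differentiating the conjugacy `α C_{a,b}(x) + β = C_{c,d}(αx + β)` twice and using
`C'' = -C` gives `C_{a,b}(x) = α (α C_{a,b}(x) + β)`. Comparing `x = 0` with `x = π`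
(where `C_{a,b}` changes sign) forces `β = 0`; then `(1 - α²) C_{a,b} = 0` with `C_{a,b} ≠ 0`
forces `α = 1`, and the conjugacy becomes `C_{a,b} = C_{c,d}`.
-/

open Real

noncomputable def cosMap (a b : ℝ) (x : ℝ) : ℝ := a * sin x + b * cos x

namespace cosMap

@[simp] lemma apply_zero (a b : ℝ) : cosMap a b 0 = b := by simp [cosMap]

@[simp] lemma apply_pi (a b : ℝ) : cosMap a b π = -b := by simp [cosMap]

@[simp] lemma apply_pi_div_two (a b : ℝ) : cosMap a b (π / 2) = a := by simp [cosMap]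

lemma neg_neg_apply (a b x : ℝ) : cosMap (-a) (-b) x = -cosMap a b x := by
  simp only [cosMap]; ring

lemma hasDerivAt (a b x : ℝ) : HasDerivAt (cosMap a b) (cosMap (-b) a x) x := by
  have := ((hasDerivAt_sin x).const_mul a).add ((hasDerivAt_cos x).const_mul b)
  exact this.congr_deriv (by simp only [cosMap]; ring)

lemma exists_ne_zero {a b : ℝ} (hab : (a, b) ≠ (0, 0)) : ∃ x, cosMap a b x ≠ 0 := by
  by_cases ha : a = 0
  · exact ⟨0, by simpa [ha] using hab⟩
  · exact ⟨π / 2, by simpa using ha⟩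

lemma injective_uncurry : Function.Injective (Function.uncurry cosMap) := by
  rintro ⟨a, b⟩ ⟨c, d⟩ h
  have h' : cosMap a b = cosMap c d := h
  simp only [Prod.mk.injEq]
  exact ⟨by simpa using congrFun h' (π / 2), by simpa using congrFun h' 0⟩

end cosMap

lemma eq_of_hasDerivAt_of_eq_comp_affine {f g f' g' : ℝ → ℝ} {α β : ℝ}
    (hf : ∀ x, HasDerivAt f (f' x) x) (hg : ∀ x, HasDerivAt g (g' x) x)
    (h : ∀ x, f x = g (α * x + β)) (x : ℝ) : f' x = α * g' (α * x + β) := by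
  have hM : HasDerivAt (fun x => α * x + β) α x := by
    simpa using ((hasDerivAt_id x).const_mul α).add_const β
  have hgM : HasDerivAt f (g' (α * x + β) * α) x := by
    simpa only [Function.comp_def, ← h] using (hg (α * x + β)).comp x hM
  rw [(hf x).unique hgM, mul_comm]

lemma cosMap_eq_of_affine_conj {a b c d α β : ℝ} (hα : α ≠ 0)
    (hconj : ∀ x, α * cosMap a b x + β = cosMap c d (α * x + β)) (x : ℝ) :
    cosMap a b x = α * (α * cosMap a b x + β) := by
  have hd₁ : ∀ x, cosMap (-b) a x = cosMap (-d) c (α * x + β) := fun x =>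
    mul_left_cancel₀ hα <| eq_of_hasDerivAt_of_eq_comp_affine
      (fun x => ((cosMap.hasDerivAt a b x).const_mul α).add_const β)
      (cosMap.hasDerivAt c d) hconj x
  have hd₂ := eq_of_hasDerivAt_of_eq_comp_affine
    (cosMap.hasDerivAt (-b) a) (cosMap.hasDerivAt (-d) c) hd₁ x
  simp only [cosMap.neg_neg_apply, ← hconj x] at hd₂
  linarith

theorem cosine_maps_affinely_rigid_general (a b c d α β : ℝ)
    (hab : (a, b) ≠ (0, 0)) (hα : 0 < α)
    (hconj : ∀ x : ℝ, α * (a * Real.sin x + b * Real.cos x) + β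
        = c * Real.sin (α * x + β) + d * Real.cos (α * x + β)) :
    (a, b) = (c, d) ∧ α = 1 ∧ β = 0 := by
  have key := cosMap_eq_of_affine_conj hα.ne' hconj
  have hβ : β = 0 := by
    have h₀ := key 0
    have hπ := key π
    simp only [cosMap.apply_zero, cosMap.apply_pi] at h₀ hπ
    have hαβ : α * β = 0 := by linarith
    exact (mul_eq_zero.1 hαβ).resolve_left hα.ne'
  subst hβ
  obtain ⟨x, hx⟩ := cosMap.exists_ne_zero hab
  have hα₁ : α = 1 := by
    have h : (1 - α ^ 2) * cosMap a b x = 0 := by linear_combination key x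
    have : α ^ 2 = 1 := by linarith [(mul_eq_zero.1 h).resolve_right hx]
    nlinarith
  subst hα₁
  refine ⟨cosMap.injective_uncurry (funext fun x => ?_), rfl, rfl⟩
  simpa [cosMap] using hconj x

/-- If an affine map `M x = α x + β` (with `α > 0`) conjugates the cosine map
`C_{a,b} x = a sin x + b cos x` to `C_{c,d}` on `ℝ`, then `(a,b) = (c,d)` and `M = id`. -/
theorem cosine_maps_affinely_rigid (a b c d α β : ℝ)
    (hab : (a, b) ≠ (0, 0)) (hcd : (c, d) ≠ (0, 0)) (hα : 0 < α)
    (hconj : ∀ x : ℝ, α * (a * Real.sin x + b * Real.cos x) + β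
        = c * Real.sin (α * x + β) + d * Real.cos (α * x + β)) :
    (a, b) = (c, d) ∧ α = 1 ∧ β = 0 :=
  cosine_maps_affinely_rigid_general a b c d α β hab hα hconj
end

section
/- Let a, c ∈ ℝ \ {0} and b, d ∈ ℝ. If there exists an affine map M(x) = αx + β with α > 0 such that M ∘ S_{a,b} = S_{c,d} ∘ M on ℝ, where S_{a,b}(x) = a·x·eˣ + b, then (a,b) = (c,d) and M is the identity. -/
/-!
Comparing both sides at `-∞`, where `x eˣ → 0`, shows that the constants agree, `α b + β = d`,
leaving `α a · x eˣ = c · y eʸ` with `y = α x + β`. At the zero `x = -β/α` of the right-hand side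
this forces `β = 0`, and comparing the values at `x = 1` and `x = -1` then forces `α = 1` and
`a = c`.
-/

open Filter Real Topology

lemma tendsto_mul_exp_atBot : Tendsto (fun x : ℝ => x * exp x) atBot (𝓝 0) := by
  have h := ((tendsto_pow_mul_exp_neg_atTop_nhds_zero 1).comp tendsto_neg_atBot_atTop).neg
  simp only [Function.comp_def, pow_one, neg_neg, neg_zero] at h
  simpa only [neg_mul, neg_neg] using h

lemma eq_zero_of_mul_exp_add_eq_mul_exp_comp {p q k α β : ℝ} (hα : 0 < α)
    (h : ∀ x, p * (x * exp x) + k = q * ((α * x + β) * exp (α * x + β))) : k = 0 := by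
  have haffine : Tendsto (fun x : ℝ => α * x + β) atBot atBot :=
    tendsto_atBot_add_const_right _ β (tendsto_id.const_mul_atBot hα)
  have hlhs : Tendsto (fun x : ℝ => p * (x * exp x) + k) atBot (𝓝 (p * 0 + k)) :=
    (tendsto_mul_exp_atBot.const_mul p).add_const k
  have hrhs : Tendsto (fun x : ℝ => q * ((α * x + β) * exp (α * x + β))) atBot (𝓝 (q * 0)) :=
    (tendsto_mul_exp_atBot.comp haffine).const_mul q
  rw [mul_zero] at hlhs hrhs
  simpa using tendsto_nhds_unique hlhs (by simpa only [h] using hrhs)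

lemma eq_zero_of_mul_exp_eq_mul_exp_comp {p q α β : ℝ} (hp : p ≠ 0) (hα : α ≠ 0)
    (h : ∀ x, p * (x * exp x) = q * ((α * x + β) * exp (α * x + β))) : β = 0 := by
  have hroot : α * (-β / α) + β = 0 := by field_simp; ring
  have := h (-β / α)
  rw [hroot, zero_mul, mul_zero] at this
  simpa [hp, hα, exp_ne_zero] using this

lemma eq_one_and_eq_of_mul_exp_eq_mul_exp_mul {p q α : ℝ} (hp : p ≠ 0)
    (h : ∀ x, p * (x * exp x) = q * (α * x * exp (α * x))) : α = 1 ∧ p = q := by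
  have h₁ : p * exp 1 = q * α * exp α := by simpa [mul_assoc] using h 1
  have h₂ : p * exp (-1) = q * α * exp (-α) := by
    have := h (-1)
    simp only [mul_neg, mul_one, neg_mul] at this
    linear_combination -this
  have hqα : q * α ≠ 0 := by
    intro h0
    rw [h0, zero_mul] at h₁
    exact hp (by simpa [exp_ne_zero] using h₁)
  have hexp : exp (1 + -α) = exp (-1 + α) := by
    apply mul_left_cancel₀ (mul_ne_zero hp hqα)
    rw [exp_add, exp_add]
    linear_combination (q * α * exp (-α)) * h₁ - (q * α * exp α) * h₂
  have hα : α = 1 := by linarith [exp_injective hexp]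
  subst hα
  exact ⟨rfl, by simpa [exp_ne_zero] using h₁⟩

theorem standard_maps_affinely_rigid_general (a b c d α β : ℝ)
    (ha : a ≠ 0) (hα : 0 < α)
    (hconj : ∀ x : ℝ, α * (a * x * Real.exp x + b) + β
        = c * (α * x + β) * Real.exp (α * x + β) + d) :
    (a, b) = (c, d) ∧ α = 1 ∧ β = 0 := by
  have hconst : α * b + β - d = 0 :=
    eq_zero_of_mul_exp_add_eq_mul_exp_comp (p := α * a) (q := c) (β := β) hα fun x => by
      linear_combination hconj x
  have hpure (x : ℝ) : α * a * (x * exp x) = c * ((α * x + β) * exp (α * x + β)) := by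
    linear_combination hconj x - hconst
  have hβ : β = 0 := eq_zero_of_mul_exp_eq_mul_exp_comp (mul_ne_zero hα.ne' ha) hα.ne' hpure
  subst hβ
  obtain ⟨rfl, hac⟩ := eq_one_and_eq_of_mul_exp_eq_mul_exp_mul (mul_ne_zero hα.ne' ha)
    (by simpa only [add_zero] using hpure)
  rw [one_mul] at hac
  subst hac
  exact ⟨by rw [show b = d by linarith], rfl, rfl⟩

/-- If an affine map `M x = α x + β` (with `α > 0`) conjugates `S_{a,b} x = a x eˣ + b`
to `S_{c,d}` on `ℝ`, then `(a,b) = (c,d)` and `M = id`. -/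
theorem standard_maps_affinely_rigid (a b c d α β : ℝ)
    (ha : a ≠ 0) (hc : c ≠ 0) (hα : 0 < α)
    (hconj : ∀ x : ℝ, α * (a * x * Real.exp x + b) + β
        = c * (α * x + β) * Real.exp (α * x + β) + d) :
    (a, b) = (c, d) ∧ α = 1 ∧ β = 0 :=
  standard_maps_affinely_rigid_general a b c d α β ha hα hconj
end

section
/- Let Q be a real polynomial with deg Q ≥ 1 and positive leading coefficient, and let P ≢ 0 be a real polynomial. Then for every M > 0 there exist θ > 0 and x₀ > 0 such that |P(x+iy)·e^{Q(x+iy)}| > M whenever x ≥ x₀ and |y| ≤ θx. -/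
/-!
On the sector `|y| ≤ θ x` the point `z = x + i y` stays within distance `θ x` of the real point
`x`, and on the disc of radius `2x` a polynomial of degree `d` is Lipschitz with constant
`L x^(d-1)`. Hence `Re Q(z) ≥ Q(x) - θ L x^d`, which still tends to `+∞` once `θ L` is below the
leading coefficient of `Q`. Since `|P|` is bounded away from zero near infinity and
`|P e^Q| = |P| e^(Re Q)`, the product eventually exceeds any `M` on the sector.
-/

open Polynomial Filter Finset Complex

theorem norm_pow_sub_pow_le {R : Type*} [NormedCommRing R] [NormOneClass R] {z w : R} {r : ℝ}
    (hz : ‖z‖ ≤ r) (hw : ‖w‖ ≤ r) (k : ℕ) :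
    ‖z ^ k - w ^ k‖ ≤ k * r ^ (k - 1) * ‖z - w‖ := by
  have hr : 0 ≤ r := (norm_nonneg z).trans hz
  rw [← geom_sum₂_mul]
  refine (norm_mul_le _ _).trans (mul_le_mul_of_nonneg_right ?_ (norm_nonneg _))
  calc ‖∑ i ∈ range k, z ^ i * w ^ (k - 1 - i)‖
      ≤ ∑ _i ∈ range k, r ^ (k - 1) := by
        refine norm_sum_le_of_le _ fun i hi => ?_
        calc ‖z ^ i * w ^ (k - 1 - i)‖ ≤ r ^ i * r ^ (k - 1 - i) := by
              refine (norm_mul_le _ _).trans ?_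
              gcongr <;> exact (norm_pow_le _ _).trans (by gcongr)
          _ = r ^ (k - 1) := by
              rw [← pow_add]
              congr 1
              have := mem_range.mp hi
              omega
    _ = k * r ^ (k - 1) := by simp

namespace Polynomial

theorem norm_eval_sub_eval_le {R : Type*} [NormedCommRing R] [NormOneClass R] (p : R[X])
    {z w : R} {r : ℝ} (hr : 1 ≤ r) (hz : ‖z‖ ≤ r) (hw : ‖w‖ ≤ r) :
    ‖p.eval z - p.eval w‖ ≤
      (∑ k ∈ range (p.natDegree + 1), ‖p.coeff k‖ * k) * r ^ (p.natDegree - 1) * ‖z - w‖ := by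
  rw [eval_eq_sum_range, eval_eq_sum_range, ← sum_sub_distrib, sum_mul, sum_mul]
  refine norm_sum_le_of_le _ fun k hk => ?_
  have hkd : k - 1 ≤ p.natDegree - 1 := by have := mem_range.mp hk; omega
  calc ‖p.coeff k * z ^ k - p.coeff k * w ^ k‖
      ≤ ‖p.coeff k‖ * (k * r ^ (k - 1) * ‖z - w‖) := by
        rw [← mul_sub]
        exact (norm_mul_le _ _).trans (by gcongr; exact norm_pow_sub_pow_le hz hw k)
    _ ≤ ‖p.coeff k‖ * k * r ^ (p.natDegree - 1) * ‖z - w‖ := by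
        have : r ^ (k - 1) ≤ r ^ (p.natDegree - 1) := pow_le_pow_right₀ hr hkd
        calc ‖p.coeff k‖ * (k * r ^ (k - 1) * ‖z - w‖)
            = ‖p.coeff k‖ * k * r ^ (k - 1) * ‖z - w‖ := by ring
          _ ≤ _ := by gcongr

theorem exists_pos_forall_le_norm_eval {R : Type*} [NormedRing R]
    [IsAbsoluteValue (norm : R → ℝ)] (p : R[X]) (hp : p ≠ 0) :
    ∃ c > 0, ∃ r : ℝ, ∀ z : R, r ≤ ‖z‖ → c ≤ ‖p.eval z‖ := by
  by_cases hdeg : 0 < p.degree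
  · have htend : Tendsto (fun z : R => ‖p.eval z‖) (comap norm atTop) atTop :=
      p.tendsto_norm_atTop hdeg tendsto_comap
    obtain ⟨r, hr⟩ := eventually_atTop.mp
      (eventually_comap.mp (htend.eventually_ge_atTop 1))
    exact ⟨1, one_pos, r, fun z hz => hr ‖z‖ hz z rfl⟩
  · rw [eq_C_of_degree_le_zero (not_lt.mp hdeg)] at hp ⊢
    exact ⟨‖p.coeff 0‖, norm_pos_iff.mpr (C_ne_zero.mp hp), 0, fun z _ => by simp⟩

theorem tendsto_eval_sub_mul_pow_natDegree_atTop {𝕜 : Type*} [NormedField 𝕜] [LinearOrder 𝕜]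
    [IsStrictOrderedRing 𝕜] [OrderTopology 𝕜] (P : 𝕜[X]) (hdeg : 0 < P.natDegree) {c : 𝕜}
    (hc : c < P.leadingCoeff) :
    Tendsto (fun x => P.eval x - c * x ^ P.natDegree) atTop atTop := by
  set R := P - C c * X ^ P.natDegree
  have hcoeff : R.coeff P.natDegree = P.leadingCoeff - c := by simp [R]
  have hR : R.natDegree = P.natDegree :=
    natDegree_eq_of_le_of_coeff_ne_zero
      ((natDegree_sub_le _ _).trans (max_le le_rfl (natDegree_C_mul_X_pow_le c _)))
      (by rw [hcoeff]; exact sub_ne_zero.mpr hc.ne')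
  have hlead : R.leadingCoeff = P.leadingCoeff - c := by rw [leadingCoeff, hR, hcoeff]
  refine (R.tendsto_atTop_of_leadingCoeff_nonneg ?_ ?_).congr fun x => by simp [R]
  · exact natDegree_pos_iff_degree_pos.mp (hR ▸ hdeg)
  · rw [hlead]; exact sub_nonneg.mpr hc.le

theorem norm_eval_add_mul_I_sub_eval_le (p : ℂ[X]) {x y : ℝ} (hx : 1 ≤ x) (hy : |y| ≤ x) :
    ‖p.eval (x + y * I) - p.eval (x : ℂ)‖ ≤
      (∑ k ∈ range (p.natDegree + 1), ‖p.coeff k‖ * k) * 2 ^ (p.natDegree - 1) *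
        x ^ (p.natDegree - 1) * |y| := by
  have hz : ‖(x : ℂ) + y * I‖ ≤ 2 * x := by
    calc ‖(x : ℂ) + y * I‖ ≤ ‖(x : ℂ)‖ + ‖(y : ℂ) * I‖ := norm_add_le _ _
      _ = |x| + |y| := by simp
      _ ≤ 2 * x := by rw [abs_of_nonneg (by linarith)]; linarith
  have hw : ‖(x : ℂ)‖ ≤ 2 * x := by
    rw [norm_real, Real.norm_eq_abs, abs_of_nonneg (by linarith)]; linarith
  have := p.norm_eval_sub_eval_le (by linarith) hz hw
  rwa [add_sub_cancel_left, norm_mul, norm_I, mul_one, norm_real, Real.norm_eq_abs, mul_pow,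
    ← mul_assoc] at this

end Polynomial

theorem exists_forall_sector_le_re_eval_map (Q : ℝ[X]) (hdeg : 0 < Q.natDegree)
    (hlead : 0 < Q.leadingCoeff) :
    ∃ θ > 0, ∀ B : ℝ, ∃ x₀ : ℝ, ∀ x y : ℝ, x₀ ≤ x → |y| ≤ θ * x →
      B ≤ ((Q.map (algebraMap ℝ ℂ)).eval (x + y * I)).re := by
  set p := Q.map (algebraMap ℝ ℂ)
  set d := Q.natDegree
  have hpd : p.natDegree = d := natDegree_map_eq_of_injective (algebraMap ℝ ℂ).injective Q
  set L := (∑ k ∈ range (d + 1), ‖p.coeff k‖ * k) * 2 ^ (d - 1)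
  have hL : 0 ≤ L := by positivity
  set θ := min 1 (Q.leadingCoeff / (L + 1))
  have hθ : 0 < θ := lt_min one_pos (by positivity)
  have hθL : θ * L < Q.leadingCoeff :=
    calc θ * L ≤ Q.leadingCoeff / (L + 1) * L := by gcongr; exact min_le_right _ _
      _ < Q.leadingCoeff := by
        rw [div_mul_eq_mul_div, div_lt_iff₀ (by positivity)]; nlinarith
  refine ⟨θ, hθ, fun B => ?_⟩
  obtain ⟨x₁, hx₁⟩ := eventually_atTop.mp
    ((Q.tendsto_eval_sub_mul_pow_natDegree_atTop hdeg hθL).eventually_ge_atTop B)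
  refine ⟨max 1 x₁, fun x y hx hy => ?_⟩
  have hx1 : 1 ≤ x := le_of_max_le_left hx
  have hyx : |y| ≤ x := hy.trans (mul_le_of_le_one_left (by linarith) (min_le_left _ _))
  have hdist : ‖p.eval (x + y * I) - p.eval (x : ℂ)‖ ≤ θ * L * x ^ d :=
    calc ‖p.eval (x + y * I) - p.eval (x : ℂ)‖ ≤ L * x ^ (d - 1) * |y| := by
          simpa only [hpd] using p.norm_eval_add_mul_I_sub_eval_le hx1 hyx
      _ ≤ L * x ^ (d - 1) * (θ * x) := by gcongr
      _ = θ * L * x ^ d := by rw [← pow_sub_one_mul hdeg.ne']; ring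
  have hreal : (p.eval (x : ℂ)).re = Q.eval x := by
    rw [eval_map, ← Complex.coe_algebraMap, eval₂_at_apply, Complex.coe_algebraMap, ofReal_re]
  calc B ≤ Q.eval x - θ * L * x ^ d := hx₁ x (le_of_max_le_right hx)
    _ ≤ (p.eval (x : ℂ)).re - ‖p.eval (x + y * I) - p.eval (x : ℂ)‖ := by linarith
    _ ≤ (p.eval (x + y * I)).re := by
        have := neg_le_of_abs_le (abs_re_le_norm (p.eval (x + y * I) - p.eval (x : ℂ)))
        rw [sub_re] at this
        linarith

/-- Sector condition for `P · e^Q` with `Q` a real polynomial of degree `≥ 1` with positive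
leading coefficient and `P ≢ 0` real: for every `M > 0` there are `θ > 0` and `x₀ > 0` with
`|P(x+iy) e^{Q(x+iy)}| > M` whenever `x ≥ x₀` and `|y| ≤ θ x`. -/
theorem sector_condition_of_P_exp_Q (P Q : Polynomial ℝ)
    (hP : P ≠ 0) (hQdeg : 1 ≤ Q.natDegree) (hQlead : 0 < Q.leadingCoeff) :
    ∀ M : ℝ, 0 < M → ∃ θ : ℝ, 0 < θ ∧ ∃ x₀ : ℝ, 0 < x₀ ∧
      ∀ x y : ℝ, x₀ ≤ x → |y| ≤ θ * x →
        M < ‖(P.map (algebraMap ℝ ℂ)).eval (x + y * Complex.I)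
            * Complex.exp ((Q.map (algebraMap ℝ ℂ)).eval (x + y * Complex.I))‖ := by
  intro M _
  obtain ⟨c, hc, r, hPc⟩ := (P.map (algebraMap ℝ ℂ)).exists_pos_forall_le_norm_eval
    ((Polynomial.map_ne_zero_iff (algebraMap ℝ ℂ).injective).mpr hP)
  obtain ⟨θ, hθ, hQ⟩ := exists_forall_sector_le_re_eval_map Q hQdeg hQlead
  obtain ⟨x₁, hx₁⟩ := hQ (M / c)
  refine ⟨θ, hθ, max 1 (max r x₁), by positivity, fun x y hx hy => ?_⟩
  have hzx : x ≤ ‖(x : ℂ) + y * I‖ := by simpa using re_le_norm ((x : ℂ) + y * I)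
  rw [norm_mul, norm_exp]
  calc M = c * (M / c) := by field_simp
    _ < c * Real.exp (M / c) := by gcongr; linarith [Real.add_one_le_exp (M / c)]
    _ ≤ _ := by
        gcongr
        · exact hPc _ ((le_max_left _ _).trans ((le_max_right _ _).trans hx) |>.trans hzx)
        · exact hx₁ x y ((le_max_right _ _).trans ((le_max_right _ _).trans hx)) hy
end
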